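/- For valid strings g, h ∈ Valid_B and each i ∈ [1,B], out_M(s^{(i-1)}_M, g_i h_i) = (max^rg_M{g,h}_i, min^rg_M{g,h}_i), i.e., applying the closure of the output operator to the metastable prefix state and input bit pair yields the i-th bits of the metastable max and min. -/

import Mathlib

/-- A Kleene "bit": `some b` is a stable bit, `none` is metastable `M`. -/
abbrev KBit := Option Bool

/-- The `B`-bit binary reflected Gray code (bit `0` most significant). -/
def rg : (B : ℕ) → ℕ → (Fin B → Bool)
  | 0, _ => fun i => i.elim0
  | B + 1, x =>
      Fin.cons (decide (2 ^ B ≤ x)) (rg B (if x < 2 ^ B then x else 2 ^ (B + 1) - 1 - x))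

/-- Decoding of a `B`-bit binary reflected Gray code string. -/
def grayVal : (B : ℕ) → (Fin B → Bool) → ℕ
  | 0, _ => 0
  | B + 1, g =>
      if g 0 then 2 ^ (B + 1) - 1 - grayVal B (fun i => g i.succ)
      else grayVal B (fun i => g i.succ)

/-- The (stable) Gray codeword `rg_B(x)` viewed as a string over `{0,1,M}`. -/
def stableStr (B : ℕ) (x : ℕ) : Fin B → KBit := fun i => some (rg B x i)

/-- The superposition `rg_B(x) * rg_B(x+1)` of two consecutive Gray codewords. -/
def superStr (B : ℕ) (x : ℕ) : Fin B → KBit :=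
  fun i => if rg B x i = rg B (x + 1) i then some (rg B x i) else none

/-- Valid strings of length `B`: Gray codewords, or superpositions of two
consecutive Gray codewords. -/
def Valid (B : ℕ) : Set (Fin B → KBit) :=
  {g | (∃ x, x < 2 ^ B ∧ g = stableStr B x) ∨ (∃ x, x + 1 < 2 ^ B ∧ g = superStr B x)}

/-- The rank of a valid string in the total order `≺`: `rg_B(x)` has rank `2x` and
`rg_B(x) * rg_B(x+1)` has rank `2x + 1`. -/
noncomputable def rank (B : ℕ) (g : Fin B → KBit) : ℕ :=
  sInf {n | (∃ x, n = 2 * x ∧ g = stableStr B x) ∨ (∃ x, n = 2 * x + 1 ∧ g = superStr B x)}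

/-- The total order `⪯` on valid strings. -/
noncomputable def preceq (B : ℕ) (g h : Fin B → KBit) : Prop := rank B g ≤ rank B h

/-- The resolution of a string over `{0,1,M}`. -/
def res {B : ℕ} (x : Fin B → KBit) : Set (Fin B → Bool) :=
  {y | ∀ i : Fin B, ∀ b : Bool, x i = some b → y i = b}

open Classical in
/-- The superposition of a set of binary strings. -/
noncomputable def supStr {B : ℕ} (S : Set (Fin B → Bool)) : Fin B → KBit :=
  fun i =>
    if ∀ y ∈ S, y i = true then some true
    else if ∀ y ∈ S, y i = false then some false
    else none

/-- `max^rg` of two stable Gray code strings: the one of larger decoded value. -/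
def maxrg (B : ℕ) (g h : Fin B → Bool) : Fin B → Bool :=
  if grayVal B h ≤ grayVal B g then g else h

/-- `min^rg` of two stable Gray code strings: the one of smaller decoded value. -/
def minrg (B : ℕ) (g h : Fin B → Bool) : Fin B → Bool :=
  if grayVal B h ≤ grayVal B g then h else g

/-- The metastable closure `max^rg_M`, taken jointly over all resolutions of the pair. -/
noncomputable def maxrgM (B : ℕ) (g h : Fin B → KBit) : Fin B → KBit :=
  supStr {z | ∃ g' ∈ res g, ∃ h' ∈ res h, z = maxrg B g' h'}

/-- The metastable closure `min^rg_M`, taken jointly over all resolutions of the pair. -/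
noncomputable def minrgM (B : ℕ) (g h : Fin B → KBit) : Fin B → KBit :=
  supStr {z | ∃ g' ∈ res g, ∃ h' ∈ res h, z = minrg B g' h'}

/-- The transition operator `⋄` of the Gray-code comparison FSM:
`00 ⋄ x = x`; `01` and `10` are absorbing; `11 ⋄ 00 = 11`, `11 ⋄ 01 = 10`,
`11 ⋄ 11 = 00`, `11 ⋄ 10 = 01`. -/
def diamond : Bool × Bool → Bool × Bool → Bool × Bool
  | (false, false), x => x
  | (false, true), _ => (false, true)
  | (true, false), _ => (true, false)
  | (true, true), (a, b) => (!a, !b)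

/-- The state `s^{(i)}(g,h)` of the Gray-code comparison FSM after processing the
input pairs `g_1 h_1, …, g_i h_i`, starting from state `00`. -/
def fsmState (B : ℕ) (g h : Fin B → Bool) (i : ℕ) : Bool × Bool :=
  (List.range i).foldl
    (fun s j => if hj : j < B then diamond s (g ⟨j, hj⟩, h ⟨j, hj⟩) else s)
    (false, false)

/-- Resolutions of a possibly-metastable pair. -/
def resP (p : KBit × KBit) : Set (Bool × Bool) :=
  {q | (∀ b : Bool, p.1 = some b → q.1 = b) ∧ (∀ b : Bool, p.2 = some b → q.2 = b)}

open Classical in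
/-- Bitwise superposition of a set of binary pairs. -/
noncomputable def supP (S : Set (Bool × Bool)) : KBit × KBit :=
  ((if ∀ s ∈ S, s.1 = true then some true
    else if ∀ s ∈ S, s.1 = false then some false else none),
   (if ∀ s ∈ S, s.2 = true then some true
    else if ∀ s ∈ S, s.2 = false then some false else none))

/-- `s^{(i)}_M(g,h)`: the superposition, over all resolutions `g' ∈ res(g)` and
`h' ∈ res(h)`, of the FSM state after processing the first `i` bit pairs. -/
noncomputable def sM (B : ℕ) (g h : Fin B → KBit) (i : ℕ) : KBit × KBit :=
  supP {s | ∃ g' ∈ res g, ∃ h' ∈ res h, s = fsmState B g' h' i}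

/-- The metastable closure of a binary operator on binary pairs. -/
noncomputable def closure2 (f : Bool × Bool → Bool × Bool → Bool × Bool)
    (x y : KBit × KBit) : KBit × KBit :=
  supP {z | ∃ x' ∈ resP x, ∃ y' ∈ resP y, z = f x' y'}

/-- The output operator `out(s, g_i h_i)`: state `00` gives
`(max{g_i,h_i}, min{g_i,h_i})`, state `10` gives `(g_i, h_i)`, state `11` gives
`(min{g_i,h_i}, max{g_i,h_i})`, and state `01` gives `(h_i, g_i)`. -/
def outOp : Bool × Bool → Bool × Bool → Bool × Bool
  | (false, false), (a, b) => (a || b, a && b)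
  | (true, false), (a, b) => (a, b)
  | (true, true), (a, b) => (a && b, a || b)
  | (false, true), (a, b) => (b, a)

/-- The metastable closure `out_M` of the output operator. -/
noncomputable def outM : KBit × KBit → KBit × KBit → KBit × KBit :=
  closure2 outOp

/-!
For stable strings the comparator state after `j` steps records either that the prefixes agree
(`00`/`11`, their parity) or which string is larger (`10`/`01`), and `out` applied to it yields
the `j`-th bits of max and min. A valid string resolves to one or two consecutive codewords,
which differ in a single bit. So a resolution of `s_M` that is a reachable state can be combined
with any resolution of the input bits by trading a resolution for one with the same prefix. The
other resolutions of `s_M` exist only when both `10` and `01` are reachable (`00` and `11` force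
this through the cross pairs); then `g` and `h` resolve to the same two consecutive codewords,
which agree at bit `j`, and `out` sees two equal stable bits.
-/


section GrayCode

variable {B : ℕ}

theorem grayVal_succ (g : Fin (B + 1) → Bool) :
    grayVal (B + 1) g = if g 0 then 2 ^ (B + 1) - 1 - grayVal B (Fin.tail g)
      else grayVal B (Fin.tail g) := rfl

theorem grayVal_lt_two_pow (g : Fin B → Bool) : grayVal B g < 2 ^ B := by
  induction B with
  | zero => simp [grayVal]
  | succ B ih =>
    have := ih (Fin.tail g)
    rw [grayVal_succ, pow_succ]
    split <;> omega

theorem grayVal_rg {x : ℕ} (hx : x < 2 ^ B) : grayVal B (rg B x) = x := by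
  induction B generalizing x with
  | zero => simp_all [grayVal]
  | succ B ih =>
    rw [pow_succ] at hx
    by_cases hxB : x < 2 ^ B
    · simp [grayVal, rg, hxB, ih hxB]
    · have hy := ih (x := 2 ^ (B + 1) - 1 - x) (by rw [pow_succ]; omega)
      simp only [grayVal, rg, hxB, Fin.cons_zero, Fin.cons_succ, if_false, hy,
        decide_eq_true (not_lt.1 hxB), if_true]
      rw [pow_succ]
      omega

theorem exists_forall_ne_rg_eq_rg_succ {x : ℕ} (hx : x + 1 < 2 ^ B) :
    ∃ k, ∀ l ≠ k, rg B x l = rg B (x + 1) l := by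
  induction B generalizing x with
  | zero => simp at hx
  | succ B ih =>
    rw [pow_succ] at hx
    rcases lt_trichotomy (x + 1) (2 ^ B) with hlt | heq | hgt
    · obtain ⟨k, hk⟩ := ih hlt
      refine ⟨k.succ, fun l hl => ?_⟩
      cases l using Fin.cases with
      | zero => simp only [rg, Fin.cons_zero, decide_eq_decide]; omega
      | succ l =>
        simp [rg, hlt, (Nat.lt_succ_self x).trans hlt, hk l (mt Fin.succ_inj.2 hl)]
    · refine ⟨0, fun l hl => ?_⟩
      cases l using Fin.cases with
      | zero => exact absurd rfl hl
      | succ l =>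
        have : 2 ^ (B + 1) - 1 - (x + 1) = x := by rw [pow_succ]; omega
        simp only [rg, Fin.cons_succ, if_pos (show x < 2 ^ B by omega),
          if_neg (show ¬ x + 1 < 2 ^ B by omega), this]
    · obtain ⟨k, hk⟩ := ih (x := 2 ^ (B + 1) - 2 - x) (by rw [pow_succ]; omega)
      refine ⟨k.succ, fun l hl => ?_⟩
      have h1 : 2 ^ (B + 1) - 1 - x = 2 ^ (B + 1) - 2 - x + 1 := by rw [pow_succ]; omega
      have h2 : 2 ^ (B + 1) - 1 - (x + 1) = 2 ^ (B + 1) - 2 - x := by omega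
      cases l using Fin.cases with
      | zero => simp only [rg, Fin.cons_zero, decide_eq_decide]; omega
      | succ l =>
        simp [rg, show ¬ x < 2 ^ B by omega, show ¬ x + 1 < 2 ^ B by omega, h1, h2,
          hk l (mt Fin.succ_inj.2 hl)]

theorem subsingleton_rg_ne_rg_succ {x : ℕ} (hx : x + 1 < 2 ^ B) :
    {l | rg B x l ≠ rg B (x + 1) l}.Subsingleton := by
  obtain ⟨k, hk⟩ := exists_forall_ne_rg_eq_rg_succ hx
  exact Set.subsingleton_singleton.anti fun l hl => by_contra fun hlk => hl (hk l hlk)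

end GrayCode

section Comparator

variable {B : ℕ}

def prefixParity (g : Fin B → Bool) : ℕ → Bool
  | 0 => false
  | j + 1 => if hj : j < B then g ⟨j, hj⟩ ^^ prefixParity g j else prefixParity g j

def FirstDiff (g h : Fin B → Bool) (k : Fin B) : Prop :=
  (∀ l < k, g l = h l) ∧ g k ≠ h k

theorem FirstDiff.symm {g h : Fin B → Bool} {k : Fin B} (hk : FirstDiff g h k) :
    FirstDiff h g k :=
  ⟨fun l hl => (hk.1 l hl).symm, hk.2.symm⟩

theorem exists_firstDiff {g h : Fin B → Bool} {j : ℕ}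
    (hne : ∃ l : Fin B, (l : ℕ) < j ∧ g l ≠ h l) : ∃ k : Fin B, (k : ℕ) < j ∧ FirstDiff g h k := by
  obtain ⟨l, hlj, hl⟩ := hne
  obtain ⟨k, hk, hmin⟩ := wellFounded_lt.has_min {l | g l ≠ h l} ⟨l, hl⟩
  exact ⟨k, lt_of_le_of_lt (not_lt.1 (hmin l hl)) hlj,
    fun l hlk => by_contra fun hne => hmin l hne hlk, hk⟩

theorem prefixParity_congr {g h : Fin B → Bool} {j : ℕ}
    (hpre : ∀ l : Fin B, (l : ℕ) < j → g l = h l) : prefixParity g j = prefixParity h j := by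
  induction j with
  | zero => rfl
  | succ j ih =>
    simp only [prefixParity, ih fun l hl => hpre l (by omega)]
    split_ifs with hj
    · rw [hpre ⟨j, hj⟩ (Nat.lt_succ_self j)]
    · rfl

theorem prefixParity_succ_tail (g : Fin (B + 1) → Bool) (k : ℕ) :
    prefixParity g (k + 1) = (prefixParity (Fin.tail g) k ^^ g 0) := by
  induction k with
  | zero => simp [prefixParity]
  | succ k ih =>
    rw [prefixParity, ih, prefixParity]
    by_cases hk : k < B
    · simp [hk, Fin.tail]
    · simp [hk]

theorem diamond_swap (s x : Bool × Bool) : diamond s.swap x.swap = (diamond s x).swap := by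
  obtain ⟨_ | _, _ | _⟩ := s <;> rfl

theorem diamond_diag (q : Bool) (x : Bool × Bool) : diamond (q, q) x = (x.1 ^^ q, x.2 ^^ q) := by
  obtain ⟨_ | _, _ | _⟩ := x <;> cases q <;> rfl

theorem fsmState_succ (g h : Fin B → Bool) (j : ℕ) :
    fsmState B g h (j + 1) = if hj : j < B then
      diamond (fsmState B g h j) (g ⟨j, hj⟩, h ⟨j, hj⟩) else fsmState B g h j := by
  simp only [fsmState, List.range_succ, List.foldl_append, List.foldl_cons, List.foldl_nil]

theorem fsmState_swap (g h : Fin B → Bool) (j : ℕ) :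
    fsmState B h g j = (fsmState B g h j).swap := by
  induction j with
  | zero => rfl
  | succ j ih =>
    rw [fsmState_succ, fsmState_succ, ih]
    split_ifs
    · exact diamond_swap _ (g _, h _)
    · rfl

theorem fsmState_congr {g h g' h' : Fin B → Bool} {j : ℕ}
    (hg : ∀ l : Fin B, (l : ℕ) < j → g l = g' l) (hh : ∀ l : Fin B, (l : ℕ) < j → h l = h' l) :
    fsmState B g h j = fsmState B g' h' j := by
  induction j with
  | zero => rfl
  | succ j ih =>
    rw [fsmState_succ, fsmState_succ, ih (fun l hl => hg l (by omega)) (fun l hl => hh l (by omega))]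
    split_ifs with hj
    · rw [hg ⟨j, hj⟩ (Nat.lt_succ_self j), hh ⟨j, hj⟩ (Nat.lt_succ_self j)]
    · rfl

theorem fsmState_of_prefix_eq {g h : Fin B → Bool} {j : ℕ}
    (hpre : ∀ l : Fin B, (l : ℕ) < j → g l = h l) :
    fsmState B g h j = (prefixParity g j, prefixParity g j) := by
  induction j with
  | zero => rfl
  | succ j ih =>
    rw [fsmState_succ, prefixParity, ih fun l hl => hpre l (by omega)]
    split_ifs with hj
    · rw [diamond_diag, ← hpre ⟨j, hj⟩ (Nat.lt_succ_self j)]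
    · rfl

theorem fsmState_of_firstDiff {g h : Fin B → Bool} {k : Fin B} (hk : FirstDiff g h k) {j : ℕ}
    (hkj : (k : ℕ) < j) :
    fsmState B g h j = (g k ^^ prefixParity g k, h k ^^ prefixParity g k) := by
  induction j, hkj using Nat.le_induction with
  | base =>
    rw [fsmState_succ, dif_pos k.2, fsmState_of_prefix_eq hk.1, diamond_diag]
  | succ j hj ih =>
    rw [fsmState_succ, ih, Bool.eq_not.2 hk.2.symm, Bool.not_xor]
    split_ifs
    · cases g k ^^ prefixParity g k <;> rfl
    · rfl

theorem fsmState_fst_eq_snd_iff {g h : Fin B → Bool} {j : ℕ} :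
    (fsmState B g h j).1 = (fsmState B g h j).2 ↔ ∀ l : Fin B, (l : ℕ) < j → g l = h l := by
  refine ⟨fun hdiag => by_contra fun hne => ?_, fun hpre => by rw [fsmState_of_prefix_eq hpre]⟩
  push Not at hne
  obtain ⟨k, hkj, hk⟩ := exists_firstDiff hne
  rw [fsmState_of_firstDiff hk hkj] at hdiag
  exact hk.2 (by simpa using hdiag)

theorem grayVal_lt_of_firstDiff {g h : Fin B → Bool} {k : Fin B} (hk : FirstDiff g h k)
    (hdir : (g k ^^ prefixParity g k) = true) : grayVal B h < grayVal B g := by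
  induction B with
  | zero => exact k.elim0
  | succ B ih =>
    have hg := grayVal_lt_two_pow (Fin.tail g)
    have hh := grayVal_lt_two_pow (Fin.tail h)
    rw [grayVal_succ, grayVal_succ, pow_succ]
    cases k using Fin.cases with
    | zero =>
      have hg0 : g 0 = true := by simpa [prefixParity] using hdir
      simp only [hg0, Bool.eq_not.2 hk.2.symm, Bool.not_true, if_true, Bool.false_eq_true, if_false]
      omega
    | succ k =>
      have h0 : g 0 = h 0 := hk.1 0 (Fin.succ_pos k)
      have hk' : FirstDiff (Fin.tail g) (Fin.tail h) k :=
        ⟨fun l hl => hk.1 l.succ (Fin.succ_lt_succ_iff.2 hl), hk.2⟩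
      rw [Fin.val_succ, prefixParity_succ_tail] at hdir
      rw [← h0]
      cases hg0 : g 0
      · simpa using ih hk' (by simpa [Fin.tail, hg0] using hdir)
      · have := ih hk'.symm (by
          rw [← prefixParity_congr hk'.1, Bool.eq_not.2 hk'.2.symm]
          simpa [Fin.tail, hg0] using hdir)
        simp only [if_true]
        omega

end Comparator

section StableOutput

variable {B : ℕ} {g h : Fin B → Bool}

theorem grayVal_lt_of_fsmState_eq_true_false {j : ℕ} (h10 : fsmState B g h j = (true, false)) :
    grayVal B h < grayVal B g := by
  have hne : ¬ ∀ l : Fin B, (l : ℕ) < j → g l = h l := fun hpre => by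
    simpa [h10] using fsmState_fst_eq_snd_iff.2 hpre
  push Not at hne
  obtain ⟨k, hkj, hk⟩ := exists_firstDiff hne
  rw [fsmState_of_firstDiff hk hkj, Prod.mk.injEq] at h10
  exact grayVal_lt_of_firstDiff hk h10.1

theorem grayVal_lt_of_fsmState_eq_false_true {j : ℕ} (h01 : fsmState B g h j = (false, true)) :
    grayVal B g < grayVal B h :=
  grayVal_lt_of_fsmState_eq_true_false (by rw [fsmState_swap, h01]; rfl)

theorem maxrg_of_le (hle : grayVal B h ≤ grayVal B g) : maxrg B g h = g := if_pos hle

theorem minrg_of_le (hle : grayVal B h ≤ grayVal B g) : minrg B g h = h := if_pos hle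

theorem maxrg_of_lt (hlt : grayVal B g < grayVal B h) : maxrg B g h = h := if_neg hlt.not_ge

theorem minrg_of_lt (hlt : grayVal B g < grayVal B h) : minrg B g h = g := if_neg hlt.not_ge

theorem outOp_eq_ite (s x : Bool × Bool) :
    outOp s x = if diamond s x = (false, true) then x.swap else x := by
  obtain ⟨_ | _, _ | _⟩ := s <;> obtain ⟨_ | _, _ | _⟩ := x <;> rfl

theorem outOp_fsmState (j : Fin B) :
    outOp (fsmState B g h j) (g j, h j) = (maxrg B g h j, minrg B g h j) := by
  have hnext : diamond (fsmState B g h j) (g j, h j) = fsmState B g h (j + 1) := by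
    rw [fsmState_succ, dif_pos j.2]
  rw [outOp_eq_ite, hnext]
  split_ifs with h01
  · rw [maxrg_of_lt (grayVal_lt_of_fsmState_eq_false_true h01),
      minrg_of_lt (grayVal_lt_of_fsmState_eq_false_true h01)]
    rfl
  · rcases le_or_gt (grayVal B h) (grayVal B g) with hle | hlt
    · rw [maxrg_of_le hle, minrg_of_le hle]
    · have h10 : fsmState B g h (j + 1) ≠ (true, false) := fun h10 =>
        (grayVal_lt_of_fsmState_eq_true_false h10).not_gt hlt
      have hdiag : (fsmState B g h (j + 1)).1 = (fsmState B g h (j + 1)).2 := by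
        revert h01 h10; generalize fsmState B g h (j + 1) = s; revert s; decide
      rw [maxrg_of_lt hlt, minrg_of_lt hlt,
        fsmState_fst_eq_snd_iff.1 hdiag j (Nat.lt_succ_self j)]

end StableOutput

section Superposition

variable {B : ℕ}

open Classical in
noncomputable def supBit (S : Set Bool) : KBit :=
  if ∀ b ∈ S, b = true then some true else if ∀ b ∈ S, b = false then some false else none

open Classical in
theorem supBit_image {α : Type*} (S : Set α) (f : α → Bool) :
    supBit (f '' S) = if ∀ a ∈ S, f a = true then some true
      else if ∀ a ∈ S, f a = false then some false else none := by
  unfold supBit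
  simp only [Set.forall_mem_image]

theorem supP_eq (S : Set (Bool × Bool)) :
    supP S = (supBit (Prod.fst '' S), supBit (Prod.snd '' S)) := by
  rw [supBit_image, supBit_image, supP]
  congr

theorem supStr_apply (S : Set (Fin B → Bool)) (i : Fin B) :
    supStr S i = supBit ((fun y => y i) '' S) := by
  rw [supBit_image, supStr]
  congr

theorem forall_supBit_eq_some_iff {S : Set Bool} (hS : S.Nonempty) {b : Bool} :
    (∀ c, supBit S = some c → b = c) ↔ b ∈ S := by
  obtain ⟨a, ha⟩ := hS
  unfold supBit
  split_ifs with h1 h2 <;> cases b <;> grind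

theorem mem_resP_supP_iff {S : Set (Bool × Bool)} (hS : S.Nonempty) {s : Bool × Bool} :
    s ∈ resP (supP S) ↔ s.1 ∈ Prod.fst '' S ∧ s.2 ∈ Prod.snd '' S := by
  rw [resP, Set.mem_ofPred_eq, supP_eq, forall_supBit_eq_some_iff (hS.image _),
    forall_supBit_eq_some_iff (hS.image _)]

theorem subset_resP_supP (S : Set (Bool × Bool)) : S ⊆ resP (supP S) := fun s hs =>
  (mem_resP_supP_iff ⟨s, hs⟩).2 ⟨⟨s, hs, rfl⟩, ⟨s, hs, rfl⟩⟩

theorem mem_of_mem_resP_supP {S : Set (Bool × Bool)} (hS : S.Nonempty) {s : Bool × Bool}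
    (hs : s ∈ resP (supP S)) (hsS : s ∉ S) : (s.1, !s.2) ∈ S ∧ (!s.1, s.2) ∈ S := by
  obtain ⟨⟨t, ht, ht1⟩, ⟨u, hu, hu2⟩⟩ := (mem_resP_supP_iff hS).1 hs
  have ht' : t = (s.1, !s.2) :=
    Prod.ext ht1 (Bool.eq_not.2 fun h2 => hsS (by rwa [← Prod.ext ht1 h2]))
  have hu' : u = (!s.1, s.2) :=
    Prod.ext (Bool.eq_not.2 fun h1 => hsS (by rwa [← Prod.ext h1 hu2])) hu2
  exact ⟨ht' ▸ ht, hu' ▸ hu⟩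

theorem res_nonempty (g : Fin B → KBit) : (res g).Nonempty :=
  ⟨fun i => (g i).getD false, fun i b hb => by simp [hb]⟩

theorem exists_mem_res_apply_eq (g : Fin B → KBit) (i : Fin B) {b : Bool}
    (hb : ∀ c, g i = some c → b = c) : ∃ g' ∈ res g, g' i = b := by
  refine ⟨Function.update (fun l => (g l).getD false) i b, fun l c hc => ?_, by simp⟩
  rcases eq_or_ne l i with rfl | hl
  · simpa using (hb c hc)
  · simp [hl, hc]

end Superposition

section ValidStrings

variable {B : ℕ} {g h : Fin B → KBit}

theorem exists_rg_of_mem_res (hg : g ∈ Valid B) :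
    ∃ x, ∀ g' ∈ res g, ∃ u < 2 ^ B, x ≤ u ∧ u ≤ x + 1 ∧ g' = rg B u := by
  rcases hg with ⟨x, hx, rfl⟩ | ⟨x, hx, rfl⟩
  · exact ⟨x, fun g' hg' => ⟨x, hx, le_rfl, by omega, funext fun i => hg' i _ rfl⟩⟩
  refine ⟨x, fun g' hg' => ?_⟩
  by_cases hgx : g' = rg B x
  · exact ⟨x, by omega, le_rfl, by omega, hgx⟩
  refine ⟨x + 1, hx, by omega, le_rfl, ?_⟩
  obtain ⟨l, hl⟩ := Function.ne_iff.1 hgx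
  have hagree : ∀ i, rg B x i = rg B (x + 1) i → g' i = rg B x i := fun i hi =>
    hg' i _ (by simp [superStr, hi])
  have hlx : rg B x l ≠ rg B (x + 1) l := fun hxl => hl (hagree l hxl)
  funext i
  by_cases hi : i = l
  · subst hi
    rw [Bool.eq_not.2 hl, Bool.eq_not.2 hlx.symm]
  · have hxi : rg B x i = rg B (x + 1) i := by_contra fun hne =>
      hi (subsingleton_rg_ne_rg_succ hx hne hlx)
    rw [hagree i hxi, hxi]

theorem subsingleton_ne_of_mem_res (hg : g ∈ Valid B) {g₁ g₂ : Fin B → Bool} (h₁ : g₁ ∈ res g)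
    (h₂ : g₂ ∈ res g) : {l | g₁ l ≠ g₂ l}.Subsingleton := by
  obtain ⟨x, hx⟩ := exists_rg_of_mem_res hg
  obtain ⟨u₁, hu₁, hxu₁, hu₁x, rfl⟩ := hx _ h₁
  obtain ⟨u₂, hu₂, hxu₂, hu₂x, rfl⟩ := hx _ h₂
  rcases (by omega : u₁ = u₂ ∨ (u₁ = x ∧ u₂ = x + 1) ∨ (u₁ = x + 1 ∧ u₂ = x)) with
    rfl | ⟨rfl, rfl⟩ | ⟨rfl, rfl⟩
  · simp
  · exact subsingleton_rg_ne_rg_succ hu₂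
  · simpa only [ne_comm] using subsingleton_rg_ne_rg_succ hu₁

theorem exists_mem_res_prefix_eq_apply_eq (hg : g ∈ Valid B) {g₀ g₁ : Fin B → Bool}
    (h₀ : g₀ ∈ res g) (h₁ : g₁ ∈ res g) (j : Fin B) :
    ∃ g₂ ∈ res g, (∀ l : Fin B, (l : ℕ) < j → g₂ l = g₀ l) ∧ g₂ j = g₁ j := by
  by_cases hj : g₀ j = g₁ j
  · exact ⟨g₀, h₀, fun _ _ => rfl, hj⟩
  refine ⟨g₁, h₁, fun l hl => by_contra fun hne => ?_, rfl⟩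
  have : l = j := subsingleton_ne_of_mem_res hg h₀ h₁ (Ne.symm hne) hj
  exact hl.ne (congrArg Fin.val this)

def fsmStates (B : ℕ) (g h : Fin B → KBit) (j : ℕ) : Set (Bool × Bool) :=
  {s | ∃ g' ∈ res g, ∃ h' ∈ res h, s = fsmState B g' h' j}

theorem exists_apply_eq_of_antidiag (hg : g ∈ Valid B) (hh : h ∈ Valid B) (j : Fin B)
    (h10 : (true, false) ∈ fsmStates B g h j) (h01 : (false, true) ∈ fsmStates B g h j) :
    ∃ b, (∀ g' ∈ res g, g' j = b) ∧ ∀ h' ∈ res h, h' j = b := by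
  obtain ⟨x, hx⟩ := exists_rg_of_mem_res hg
  obtain ⟨y, hy⟩ := exists_rg_of_mem_res hh
  obtain ⟨_, hg₁, _, hh₁, e₁⟩ := h10
  obtain ⟨_, hg₂, _, hh₂, e₂⟩ := h01
  obtain ⟨u₁, hu₁, hxu₁, hu₁x, rfl⟩ := hx _ hg₁
  obtain ⟨v₁, hv₁, hyv₁, hv₁y, rfl⟩ := hy _ hh₁
  obtain ⟨u₂, hu₂, hxu₂, hu₂x, rfl⟩ := hx _ hg₂
  obtain ⟨v₂, hv₂, hyv₂, hv₂y, rfl⟩ := hy _ hh₂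
  have hlt₁ := grayVal_lt_of_fsmState_eq_true_false e₁.symm
  have hlt₂ := grayVal_lt_of_fsmState_eq_false_true e₂.symm
  rw [grayVal_rg hu₁, grayVal_rg hv₁] at hlt₁
  rw [grayVal_rg hu₂, grayVal_rg hv₂] at hlt₂
  obtain ⟨hu, hv, hxy⟩ : u₁ = x + 1 ∧ v₁ = x ∧ y = x := by omega
  subst u₁ v₁ y
  -- `rg (x + 1)` and `rg x` are told apart before `j`, at their only differing bit
  have hbit : rg B x j = rg B (x + 1) j := by
    by_contra hne
    have hpre : ∀ l : Fin B, (l : ℕ) < j → rg B (x + 1) l = rg B x l := fun l hl =>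
      by_contra fun hl' => hl.ne (congrArg Fin.val (subsingleton_rg_ne_rg_succ hu₁ (Ne.symm hl') hne))
    simpa [← e₁] using fsmState_fst_eq_snd_iff.2 hpre
  have hall : ∀ u, x ≤ u → u ≤ x + 1 → rg B u j = rg B x j := fun u h₁ h₂ => by
    rcases (by omega : u = x ∨ u = x + 1) with rfl | rfl
    exacts [rfl, hbit.symm]
  refine ⟨rg B x j, fun g' hg' => ?_, fun h' hh' => ?_⟩
  · obtain ⟨u, -, h₁, h₂, rfl⟩ := hx g' hg'
    exact hall u h₁ h₂
  · obtain ⟨v, -, h₁, h₂, rfl⟩ := hy h' hh'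
    exact hall v h₁ h₂

theorem antidiag_mem_of_diag (hg : g ∈ Valid B) (hh : h ∈ Valid B) {j : ℕ}
    (h00 : (false, false) ∈ fsmStates B g h j) (h11 : (true, true) ∈ fsmStates B g h j) :
    (true, false) ∈ fsmStates B g h j ∧ (false, true) ∈ fsmStates B g h j := by
  obtain ⟨g₁, hg₁, h₁, hh₁, e₁⟩ := h00
  obtain ⟨g₂, hg₂, h₂, hh₂, e₂⟩ := h11
  have hpre₁ : ∀ l : Fin B, (l : ℕ) < j → g₁ l = h₁ l := fsmState_fst_eq_snd_iff.1 (by rw [← e₁])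
  have hpre₂ : ∀ l : Fin B, (l : ℕ) < j → g₂ l = h₂ l := fsmState_fst_eq_snd_iff.1 (by rw [← e₂])
  have hpar₁ : prefixParity g₁ j = false := by simpa [← e₁] using (fsmState_of_prefix_eq hpre₁).symm
  have hpar₂ : prefixParity g₂ j = true := by simpa [← e₂] using (fsmState_of_prefix_eq hpre₂).symm
  obtain ⟨k, hkj, hk⟩ : ∃ k : Fin B, (k : ℕ) < j ∧ g₁ k ≠ g₂ k := by
    by_contra! hall
    simpa [hpar₁, hpar₂] using prefixParity_congr hall
  have hhk : h₁ k ≠ h₂ k := by rwa [← hpre₁ k hkj, ← hpre₂ k hkj]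
  have hg₁₂ : ∀ l, l ≠ k → g₁ l = g₂ l := fun l hl =>
    by_contra fun hne => hl (subsingleton_ne_of_mem_res hg hg₁ hg₂ hne hk)
  have hh₁₂ : ∀ l, l ≠ k → h₁ l = h₂ l := fun l hl =>
    by_contra fun hne => hl (subsingleton_ne_of_mem_res hh hh₁ hh₂ hne hhk)
  -- the cross pairs `(g₁, h₂)` and `(g₂, h₁)` first differ at `k`, in opposite directions
  have hd₁ : FirstDiff g₁ h₂ k :=
    ⟨fun l hl => (hpre₁ l (Nat.lt_trans hl hkj)).trans (hh₁₂ l hl.ne), by rwa [hpre₁ k hkj]⟩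
  have hd₂ : FirstDiff g₂ h₁ k :=
    ⟨fun l hl => (hg₁₂ l hl.ne).symm.trans (hpre₁ l (Nat.lt_trans hl hkj)),
      by rw [← hpre₁ k hkj]; exact Ne.symm hk⟩
  have hmem₁ : fsmState B g₁ h₂ j ∈ fsmStates B g h j := ⟨g₁, hg₁, h₂, hh₂, rfl⟩
  have hmem₂ : fsmState B g₂ h₁ j ∈ fsmStates B g h j := ⟨g₂, hg₂, h₁, hh₁, rfl⟩
  rw [fsmState_of_firstDiff hd₁ hkj, Bool.eq_not.2 hhk.symm, ← hpre₁ k hkj] at hmem₁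
  rw [fsmState_of_firstDiff hd₂ hkj, Bool.eq_not.2 hk.symm, ← hpre₁ k hkj,
    prefixParity_congr fun l hl => (hg₁₂ l (ne_of_lt hl)).symm] at hmem₂
  revert hmem₁ hmem₂
  cases g₁ k <;> cases prefixParity g₁ k <;> simp +contextual

end ValidStrings

section Output

variable {B : ℕ} {g h : Fin B → KBit}

theorem exists_apply_eq_of_not_mem_fsmStates (hg : g ∈ Valid B) (hh : h ∈ Valid B) (j : Fin B)
    {s : Bool × Bool} (hs : s ∈ resP (sM B g h j)) (hsS : s ∉ fsmStates B g h j) :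
    ∃ b, (∀ g' ∈ res g, g' j = b) ∧ ∀ h' ∈ res h, h' j = b := by
  obtain ⟨g₀, hg₀⟩ := res_nonempty g
  obtain ⟨h₀, hh₀⟩ := res_nonempty h
  have hS : (fsmStates B g h j).Nonempty := ⟨_, g₀, hg₀, h₀, hh₀, rfl⟩
  obtain ⟨hs₁, hs₂⟩ := mem_of_mem_resP_supP hS hs hsS
  obtain ⟨_ | _, _ | _⟩ := s
  · exact exists_apply_eq_of_antidiag hg hh j hs₂ hs₁
  · exact exists_apply_eq_of_antidiag hg hh j (antidiag_mem_of_diag hg hh hs₁ hs₂).1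
      (antidiag_mem_of_diag hg hh hs₁ hs₂).2
  · exact exists_apply_eq_of_antidiag hg hh j (antidiag_mem_of_diag hg hh hs₂ hs₁).1
      (antidiag_mem_of_diag hg hh hs₂ hs₁).2
  · exact exists_apply_eq_of_antidiag hg hh j hs₁ hs₂

theorem outOp_diag (s : Bool × Bool) (b : Bool) : outOp s (b, b) = (b, b) := by
  obtain ⟨_ | _, _ | _⟩ := s <;> cases b <;> rfl

theorem outOp_resolutions_eq (hg : g ∈ Valid B) (hh : h ∈ Valid B) (j : Fin B) :
    {z | ∃ s ∈ resP (sM B g h j), ∃ p ∈ resP (g j, h j), z = outOp s p} =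
      {z | ∃ g' ∈ res g, ∃ h' ∈ res h, z = (maxrg B g' h' j, minrg B g' h' j)} := by
  ext z
  constructor
  · rintro ⟨s, hs, p, hp, rfl⟩
    obtain ⟨g₁, hg₁, hp₁⟩ := exists_mem_res_apply_eq g j hp.1
    obtain ⟨h₁, hh₁, hp₂⟩ := exists_mem_res_apply_eq h j hp.2
    obtain rfl : p = (g₁ j, h₁ j) := Prod.ext hp₁.symm hp₂.symm
    by_cases hsS : s ∈ fsmStates B g h j
    · -- replace `g₀, h₀` by resolutions with the same prefixes and the requested bits at `j`
      obtain ⟨g₀, hg₀, h₀, hh₀, rfl⟩ := hsS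
      obtain ⟨g₂, hg₂, hpre_g, hbit_g⟩ := exists_mem_res_prefix_eq_apply_eq hg hg₀ hg₁ j
      obtain ⟨h₂, hh₂, hpre_h, hbit_h⟩ := exists_mem_res_prefix_eq_apply_eq hh hh₀ hh₁ j
      refine ⟨g₂, hg₂, h₂, hh₂, ?_⟩
      rw [← hbit_g, ← hbit_h, fsmState_congr (fun l hl => (hpre_g l hl).symm)
        (fun l hl => (hpre_h l hl).symm), outOp_fsmState]
    · obtain ⟨b, hbg, hbh⟩ := exists_apply_eq_of_not_mem_fsmStates hg hh j hs hsS
      refine ⟨g₁, hg₁, h₁, hh₁, ?_⟩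
      rw [hbg g₁ hg₁, hbh h₁ hh₁, outOp_diag]
      unfold maxrg minrg
      split_ifs <;> simp [hbg g₁ hg₁, hbh h₁ hh₁]
  · rintro ⟨g', hg', h', hh', rfl⟩
    exact ⟨_, subset_resP_supP _ ⟨g', hg', h', hh', rfl⟩, (g' j, h' j),
      ⟨fun b hb => hg' j b hb, fun b hb => hh' j b hb⟩, (outOp_fsmState j).symm⟩

end Output

/-- For valid strings `g, h` and each `i ∈ [1,B]`, applying `out_M` to the metastable
prefix state `s^{(i-1)}_M` and the `i`-th input bit pair yields the `i`-th bits of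
`max^rg_M{g,h}` and `min^rg_M{g,h}`. -/
theorem outM_correct (B : ℕ) (g h : Fin B → KBit) (hg : g ∈ Valid B) (hh : h ∈ Valid B)
    (i : ℕ) (hi1 : 1 ≤ i) (hiB : i ≤ B) :
    outM (sM B g h (i - 1)) (g ⟨i - 1, by omega⟩, h ⟨i - 1, by omega⟩) =
      (maxrgM B g h ⟨i - 1, by omega⟩, minrgM B g h ⟨i - 1, by omega⟩) := by
  set j : Fin B := ⟨i - 1, by omega⟩
  change closure2 outOp (sM B g h j) (g j, h j) = (maxrgM B g h j, minrgM B g h j)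
  rw [closure2, outOp_resolutions_eq hg hh j, supP_eq, maxrgM, minrgM, supStr_apply, supStr_apply]
  congr 2 <;> ext b <;> constructor <;> rintro ⟨_, ⟨g', hg', h', hh', rfl⟩, rfl⟩ <;>
    exact ⟨_, ⟨g', hg', h', hh', rfl⟩, rfl⟩
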